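/- arXiv:1012.3011 — 2 statements merged into one kernel-verified Lean document; each statement's English description precedes it below -/
import Mathlib

section
/- Let x : L × R → {0,1} be any function satisfying x(ℓ₁,r₁) + x(ℓ₁,r₂) + x(ℓ₂,r₁) + x(ℓ₂,r₂) ≥ 1 for every bad square {ℓ₁,ℓ₂,r₁,r₂}. Then for every tuple T = (ℓ₁, ℓ₂, R₁, R₁₂, R₂) with R₁₂ and R₂ nonempty, the tuple constraint holds: (1/|R₂|) · Σ_{r₂ ∈ R₂} (x(ℓ₁,r₂) + x(ℓ₂,r₂)) + (1/|R₁₂|) · Σ_{r ∈ R₁₂} (x(ℓ₁,r) + x(ℓ₂,r)) ≥ 1. -/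
/-- Exactly three of the four pairs `(ℓᵢ, rⱼ)` are edges. -/
def BadSquare {L R : Type*} (E : L → R → Prop) (l1 l2 : L) (r1 r2 : R) : Prop :=
  l1 ≠ l2 ∧ r1 ≠ r2 ∧
    ((¬ E l1 r1 ∧ E l1 r2 ∧ E l2 r1 ∧ E l2 r2) ∨
     (E l1 r1 ∧ ¬ E l1 r2 ∧ E l2 r1 ∧ E l2 r2) ∨
     (E l1 r1 ∧ E l1 r2 ∧ ¬ E l2 r1 ∧ E l2 r2) ∨
     (E l1 r1 ∧ E l1 r2 ∧ E l2 r1 ∧ ¬ E l2 r2))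

/-!
Every pair `(r₂, r)` with `r₂ ∈ R₂`, `r ∈ R₁₂` spans a bad square with `ℓ₁, ℓ₂`, so its square
constraint bounds the sum of the two column totals `x(ℓ₁,·) + x(ℓ₂,·)` from below by `1`.
A bound that holds for every pair holds for the pair of averages.
-/

open Finset
open scoped BigOperators

theorem badSquare_of_mem_common_of_mem_exclusive {L R : Type*} {E : L → R → Prop} {l1 l2 : L}
    {r r2 : R} (hl : l1 ≠ l2) (hr : E l1 r ∧ E l2 r) (hr2 : E l2 r2 ∧ ¬ E l1 r2) :
    BadSquare E l1 l2 r r2 :=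
  ⟨hl, fun h ↦ hr2.2 (h ▸ hr.1), Or.inr (Or.inl ⟨hr.1, hr2.2, hr.2, hr2.1⟩)⟩

theorem le_expect_add_expect {ι κ α : Type*} [AddCommGroup α] [PartialOrder α]
    [IsOrderedAddMonoid α] [Module ℚ≥0 α] [PosSMulMono ℚ≥0 α]
    {s : Finset ι} {t : Finset κ} (hs : s.Nonempty) (ht : t.Nonempty) {f : ι → α} {g : κ → α}
    {c : α} (h : ∀ i ∈ s, ∀ j ∈ t, c ≤ f i + g j) :
    c ≤ 𝔼 i ∈ s, f i + 𝔼 j ∈ t, g j := by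
  have hg : ∀ j ∈ t, c - 𝔼 i ∈ s, f i ≤ g j := fun j hj ↦
    sub_le_comm.mp <| le_expect hs fun i hi ↦ sub_le_iff_le_add.mpr (h i hi j hj)
  exact sub_le_iff_le_add'.mp (le_expect ht hg)

theorem tuple_constraint_of_square_constraints_general {L R : Type*}
    (E : L → R → Prop) (x : L → R → ℝ)
    (hsq : ∀ l1 l2 r1 r2, BadSquare E l1 l2 r1 r2 →
      1 ≤ x l1 r1 + x l1 r2 + x l2 r1 + x l2 r2)
    (l1 l2 : L) (hl : l1 ≠ l2) (R12 R2 : Finset R)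
    (hR2 : ∀ r ∈ R2, E l2 r ∧ ¬ E l1 r)
    (hR12 : ∀ r ∈ R12, E l1 r ∧ E l2 r)
    (hR12ne : R12.Nonempty) (hR2ne : R2.Nonempty) :
    1 ≤ (1 / (R2.card : ℝ)) * ∑ r ∈ R2, (x l1 r + x l2 r)
      + (1 / (R12.card : ℝ)) * ∑ r ∈ R12, (x l1 r + x l2 r) := by
  simp only [one_div_mul_eq_div, ← expect_eq_sum_div_card]
  refine le_expect_add_expect hR2ne hR12ne fun r2 hr2 r hr ↦ ?_
  have := hsq l1 l2 r r2 (badSquare_of_mem_common_of_mem_exclusive hl (hR12 r hr) (hR2 r2 hr2))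
  linarith

/-- If a `{0,1}`-valued `x` satisfies all bad-square constraints, then it
satisfies every tuple constraint. -/
theorem tuple_constraint_of_square_constraints {L R : Type*}
    (E : L → R → Prop) (x : L → R → ℝ)
    (hx01 : ∀ l r, x l r = 0 ∨ x l r = 1)
    (hsq : ∀ l1 l2 r1 r2, BadSquare E l1 l2 r1 r2 →
      1 ≤ x l1 r1 + x l1 r2 + x l2 r1 + x l2 r2)
    (l1 l2 : L) (hl : l1 ≠ l2) (R1 R12 R2 : Finset R)
    (hR1 : ∀ r ∈ R1, E l1 r ∧ ¬ E l2 r)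
    (hR2 : ∀ r ∈ R2, E l2 r ∧ ¬ E l1 r)
    (hR12 : ∀ r ∈ R12, E l1 r ∧ E l2 r)
    (hR12ne : R12.Nonempty) (hR2ne : R2.Nonempty) :
    1 ≤ (1 / (R2.card : ℝ)) * ∑ r ∈ R2, (x l1 r + x l2 r)
      + (1 / (R12.card : ℝ)) * ∑ r ∈ R12, (x l1 r + x l2 r) :=
  tuple_constraint_of_square_constraints_general E x hsq l1 l2 hl R12 R2 hR2 hR12 hR12ne hR2ne
end

section
/- In the graph G_n (complete bipartite on n+n vertices minus the perfect matching {(ℓᵢ,rᵢ)}), if a clustering B has a single cluster that contains at least n−1 right vertices and exactly k left vertices, then the clustering cost of B is at least (n−1−k)(n−2). -/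
open Finset

/-- In `G_n` (edges `(i,j)` for `i ≠ j`), if a clustering `f` has a cluster `c`
containing at least `n - 1` of the right vertices and exactly `k` of the left
vertices, then its cost is at least `(n - 1 - k) * (n - 2)`. -/
theorem big_cluster_cost_lower_bound (n k : ℕ) {κ : Type*} [DecidableEq κ]
    (f : Fin n ⊕ Fin n → κ) (c : κ)
    (hR : n - 1 ≤ (univ.filter (fun j : Fin n => f (Sum.inr j) = c)).card)
    (hL : (univ.filter (fun i : Fin n => f (Sum.inl i) = c)).card = k) :
    (n - 1 - k) * (n - 2) ≤
      (univ.filter (fun p : Fin n × Fin n =>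
        (p.1 ≠ p.2 ∧ ¬ f (Sum.inl p.1) = f (Sum.inr p.2)) ∨
        (p.1 = p.2 ∧ f (Sum.inl p.1) = f (Sum.inr p.2)))).card := by
  classical
  by_cases hn : n ≤ 2
  · have : n - 2 = 0 := by omega
    simp [this]
  push_neg at hn
  set R : Finset (Fin n) := univ.filter (fun j : Fin n => f (Sum.inr j) = c) with hRdef
  set L' : Finset (Fin n) := univ.filter (fun i : Fin n => ¬ f (Sum.inl i) = c) with hL'def
  have hL' : L'.card = n - k := by
    have h := Finset.card_filter_add_card_filter_not
      (s := (univ : Finset (Fin n))) (p := fun i => f (Sum.inl i) = c)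
    simp only [Finset.card_univ, Fintype.card_fin] at h
    rw [hL'def]
    omega
  set T : Finset (Fin n × Fin n) := (L' ×ˢ R).filter (fun p => p.1 ≠ p.2) with hTdef
  have hsub : T ⊆ univ.filter (fun p : Fin n × Fin n =>
        (p.1 ≠ p.2 ∧ ¬ f (Sum.inl p.1) = f (Sum.inr p.2)) ∨
        (p.1 = p.2 ∧ f (Sum.inl p.1) = f (Sum.inr p.2))) := by
    intro p hp
    simp only [hTdef, hL'def, hRdef, Finset.mem_filter, Finset.mem_product,
      Finset.mem_univ, true_and] at hp ⊢
    obtain ⟨⟨h1, h2⟩, h3⟩ := hp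
    exact Or.inl ⟨h3, by rw [h2]; exact h1⟩
  have hdiag : ((L' ×ˢ R).filter (fun p : Fin n × Fin n => p.1 = p.2)).card ≤ L'.card := by
    apply Finset.card_le_card_of_injOn (fun p => p.1)
    · intro p hp
      simp only [Finset.mem_coe, Finset.mem_filter, Finset.mem_product] at hp
      exact hp.1.1
    · intro p hp q hq hpq
      simp only [Finset.mem_coe, Finset.mem_filter] at hp hq
      have h1 : p.1 = q.1 := hpq
      exact Prod.ext h1 (by rw [← hp.2, ← hq.2]; exact h1)
  have hsplit := Finset.card_filter_add_card_filter_not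
    (s := L' ×ˢ R) (p := fun p : Fin n × Fin n => p.1 = p.2)
  rw [Finset.card_product] at hsplit
  have hTcard : L'.card * R.card - L'.card ≤ T.card := by
    have : T.card = ((L' ×ˢ R).filter (fun p : Fin n × Fin n => ¬ p.1 = p.2)).card := by
      rfl
    omega
  have hkey : (n - 1 - k) * (n - 2) ≤ T.card := by
    calc (n - 1 - k) * (n - 2) ≤ (n - k) * (n - 2) :=
          Nat.mul_le_mul_right _ (by omega)
      _ ≤ (n - k) * R.card - (n - k) := by
          have h1 : n - 1 ≤ R.card := hR
          have h2 : (n - k) * (n - 1) = (n - k) * (n - 2) + (n - k) := by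
            have : n - 1 = (n - 2) + 1 := by omega
            rw [this, Nat.mul_add, Nat.mul_one]
          have h3 : (n - k) * (n - 1) ≤ (n - k) * R.card := Nat.mul_le_mul_left _ h1
          omega
      _ ≤ T.card := by rw [← hL']; exact hTcard
  exact le_trans hkey (Finset.card_le_card hsub)
end
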